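/- arXiv:1210.6378 — 3 statements merged into one kernel-verified Lean document; each statement's English description precedes it below -/
import Mathlib

section
/- Let M, N, P be positive integers, L₁ = min(M+1, N) and L₂ = max(M+1, N). Define T_P = 4·∑_{k=1}^{L₁}(⌊(k-1)/P⌋ + 1) + 2·(L₂ - L₁ - 1)·(⌊(L₁-1)/P⌋ + 1) (assuming L₂ ≥ L₁ + 1). Then T_P = 2(L₁ + L₂ - 1) + 2·⌊(L₁-1)/P⌋·(L₁ + L₂ - 1 - P - P·⌊(L₁-1)/P⌋). -/
/-! The only nonlinear ingredient is the floor sum: with q = ⌊(n-1)/P⌋, the terms ⌊j/P⌋ for j < n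
take each value i < q exactly P times and the value q the remaining n - Pq times, so
2 ∑_{j<n} ⌊j/P⌋ = 2qn - Pq(q+1). The identity for T_P is this closed form plus linear bookkeeping. -/

open Finset

theorem two_mul_sum_range_succ_div (P n : ℕ) :
    2 * ∑ j ∈ range (n + 1), j / P + P * (n / P) * (n / P + 1) = 2 * (n / P) * (n + 1) := by
  induction n with
  | zero => simp
  | succ n ih =>
    rw [sum_range_succ]
    by_cases hdvd : P ∣ n + 1
    · have hP : P * (n / P + 1) = n + 1 := by
        rw [← Nat.succ_div_of_dvd hdvd, Nat.mul_div_cancel' hdvd]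
      rw [Nat.succ_div_of_dvd hdvd]
      linear_combination ih + 2 * hP
    · rw [Nat.succ_div_of_not_dvd hdvd]
      linear_combination ih

theorem two_mul_sum_range_div (P n : ℕ) :
    2 * ∑ j ∈ range n, j / P + P * ((n - 1) / P) * ((n - 1) / P + 1) =
      2 * ((n - 1) / P) * n := by
  cases n with
  | zero => simp
  | succ n => simpa using two_mul_sum_range_succ_div P n

theorem stmt_1_general (P : ℕ)
    (L₁ L₂ : ℕ) :
    (4 * ∑ k ∈ Finset.Icc 1 L₁, ((((k - 1) / P : ℕ) : ℤ) + 1)) +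
        2 * ((L₂ : ℤ) - L₁ - 1) * ((((L₁ - 1) / P : ℕ) : ℤ) + 1) =
      2 * ((L₁ : ℤ) + L₂ - 1) +
        2 * (((L₁ - 1) / P : ℕ) : ℤ) *
          ((L₁ : ℤ) + L₂ - 1 - P - P * (((L₁ - 1) / P : ℕ) : ℤ)) := by
  have hsum := congrArg (Nat.cast : ℕ → ℤ) (two_mul_sum_range_div P L₁)
  push_cast at hsum
  rw [← Ico_add_one_right_eq_Icc, sum_Ico_eq_sum_range, sum_add_distrib]
  simp only [add_tsub_cancel_left, add_tsub_cancel_right, sum_const, card_range, nsmul_eq_mul, mul_one]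
  push_cast
  linear_combination 2 * hsum

theorem stmt_1 (M N P : ℕ) (hM : 1 ≤ M) (hN : 1 ≤ N) (hP : 1 ≤ P)
    (L₁ L₂ : ℕ) (hL₁ : L₁ = min (M + 1) N) (hL₂ : L₂ = max (M + 1) N)
    (h : L₁ + 1 ≤ L₂) :
    (4 * ∑ k ∈ Finset.Icc 1 L₁, ((((k - 1) / P : ℕ) : ℤ) + 1)) +
        2 * ((L₂ : ℤ) - L₁ - 1) * ((((L₁ - 1) / P : ℕ) : ℤ) + 1) =
      2 * ((L₁ : ℤ) + L₂ - 1) +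
        2 * (((L₁ - 1) / P : ℕ) : ℤ) *
          ((L₁ : ℤ) + L₂ - 1 - P - P * (((L₁ - 1) / P : ℕ) : ℤ)) :=
  stmt_1_general P L₁ L₂
end

section
/- Let M, N ≥ 1 and define the in-place update: start with d_{-1} = d_0 = ... = d_{min(M+1,N)} = 0 (indexed appropriately), and for k = 1,...,M+N, for j from max(1,k-M) up to min(k,N) in increasing order, set d_{k-j} ← max(d_{k-j-1}, d_{k-j}) + τ_{k-j,j}. Then after all iterations, d_i = D_{i,N} for every 0 ≤ i ≤ M, where D is defined by D_{i,0}=0, D_{-1,j}=0, D_{i,j} = max(D_{i-1,j}, D_{i,j-1}) + τ_{i,j}. -/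
/-!
Index the array with a shift, so that `d (i + 1)` is the entry of server `i` and `d 0` is the
sentinel `d_{-1} = 0`. After the `k`-th outer iteration, the entry of server `i` is
`D i (min (k - i) N)`: the outer loop walks the antidiagonals `i + j = k`, and the inner loop visits
them by increasing `j`, i.e. by decreasing `i`. So when server `i` is updated with `j = k - i`, its own
entry still holds `D i (j - 1)` and the entry of server `i - 1`, not yet touched on this antidiagonal,
holds `D (i - 1) j`: the update is exactly the recursion for `D i j`.
-/

section DepartureSweep

variable (M N : ℕ) (τ D : ℕ → ℕ → ℝ)

def departureUpdate (k : ℕ) (d : ℕ → ℝ) (j : ℕ) : ℕ → ℝ :=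
  Function.update d (k - j + 1) (max (d (k - j)) (d (k - j + 1)) + τ (k - j) j)

def antidiagonalSweep (d : ℕ → ℝ) (k : ℕ) : ℕ → ℝ :=
  (List.range' (max 1 (k - M)) (min k N + 1 - max 1 (k - M))).foldl (departureUpdate τ k) d

/-- `d` holds the departure times after the first `k` antidiagonals. -/
def StoresDiagonal (k : ℕ) (d : ℕ → ℝ) : Prop :=
  d 0 = 0 ∧ ∀ i ≤ M, d (i + 1) = D i (min (k - i) N)

/-- `d` holds the departure times during antidiagonal `k`, once the columns `j < c` are done,
i.e. the servers `i > k - c`. -/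
def StoresPartialDiagonal (k c : ℕ) (d : ℕ → ℝ) : Prop :=
  d 0 = 0 ∧ ∀ i ≤ M, d (i + 1) = D i (min ((if k < c + i then k else k - 1) - i) N)

def SatisfiesDepartureRecursion : Prop :=
  ∀ i j : ℕ, i ≤ M → 1 ≤ j →
    D i j = max (if i = 0 then (0 : ℝ) else D (i - 1) j) (D i (j - 1)) + τ i j

variable {M N τ D}

theorem StoresPartialDiagonal.step
    (hrec : SatisfiesDepartureRecursion M τ D)
    {k c : ℕ} {d : ℕ → ℝ} (hd : StoresPartialDiagonal M N D k c d)
    (hc : 1 ≤ c) (hkc : k ≤ M + c) (hcN : c ≤ min k N) :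
    StoresPartialDiagonal M N D k (c + 1) (departureUpdate τ k d c) := by
  obtain ⟨hd0, hd⟩ := hd
  refine ⟨by rw [departureUpdate, Function.update_of_ne (by omega), hd0], fun i hi => ?_⟩
  rw [departureUpdate, Function.update_apply]
  by_cases hik : i = k - c
  · subst hik
    have hown : d (k - c + 1) = D (k - c) (c - 1) := by
      rw [hd _ hi, if_neg (by omega)]
      congr 1; omega
    have hprev : d (k - c) = if k - c = 0 then 0 else D (k - c - 1) c := by
      split_ifs with h0
      · rw [h0, hd0]
      · rw [show k - c = k - c - 1 + 1 by omega, hd _ (by omega), if_neg (by omega)]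
        congr 1; omega
    rw [if_pos rfl, if_pos (by omega), show min (k - (k - c)) N = c by omega, hown, hprev,
      ← hrec _ _ hi hc]
  · rw [if_neg (by omega), hd i hi]
    simp only [show k < c + 1 + i ↔ k < c + i by omega]

theorem StoresPartialDiagonal.foldl_range'
    (hrec : SatisfiesDepartureRecursion M τ D)
    {k : ℕ} (n : ℕ) {c : ℕ} {d : ℕ → ℝ} (hd : StoresPartialDiagonal M N D k c d)
    (hc : 1 ≤ c) (hkc : k ≤ M + c) (hcn : c + n ≤ min k N + 1) :
    StoresPartialDiagonal M N D k (c + n)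
      ((List.range' c n).foldl (departureUpdate τ k) d) := by
  induction n generalizing c d with
  | zero => exact hd
  | succ n ih =>
    rw [List.range'_succ, List.foldl_cons, show c + (n + 1) = c + 1 + n by omega]
    exact ih (hd.step hrec hc hkc (by omega)) (by omega) (by omega) (by omega)

theorem StoresDiagonal.sweep
    (hrec : SatisfiesDepartureRecursion M τ D)
    {k : ℕ} {d : ℕ → ℝ} (hd : StoresDiagonal M N D k d) (hk : k + 1 ≤ M + N) :
    StoresDiagonal M N D (k + 1) (antidiagonalSweep M N τ d (k + 1)) := by
  obtain ⟨hd0, hd⟩ := hd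
  set c := max 1 (k + 1 - M)
  have hc : 1 ≤ c ∧ k + 1 - M ≤ c := ⟨le_max_left _ _, le_max_right _ _⟩
  have hstart : StoresPartialDiagonal M N D (k + 1) c d := by
    refine ⟨hd0, fun i hi => ?_⟩
    rw [hd i hi]
    congr 1
    split_ifs <;> omega
  obtain ⟨hd0', hd'⟩ := hstart.foldl_range' hrec (min (k + 1) N + 1 - c)
    hc.1 (by omega) (by omega)
  refine ⟨hd0', fun i hi => ?_⟩
  rw [antidiagonalSweep, hd' i hi]
  congr 1
  split_ifs <;> omega

theorem StoresDiagonal.foldl_range'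
    (hrec : SatisfiesDepartureRecursion M τ D)
    {k : ℕ} (n : ℕ) {d : ℕ → ℝ} (hd : StoresDiagonal M N D k d) (hkn : k + n ≤ M + N) :
    StoresDiagonal M N D (k + n)
      ((List.range' (k + 1) n).foldl (antidiagonalSweep M N τ) d) := by
  induction n generalizing k d with
  | zero => exact hd
  | succ n ih =>
    rw [List.range'_succ, List.foldl_cons, show k + (n + 1) = k + 1 + n by omega]
    exact ih (hd.sweep hrec (by omega)) (by omega)

end DepartureSweep

theorem stmt_11_general (M N : ℕ) (τ D : ℕ → ℕ → ℝ)
    (hD0 : ∀ i, D i 0 = 0)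
    (hrec : ∀ i j : ℕ, i ≤ M → 1 ≤ j →
      D i j = max (if i = 0 then (0 : ℝ) else D (i - 1) j) (D i (j - 1)) + τ i j) :
    ∀ i : ℕ, i ≤ M →
      ((List.range' 1 (M + N)).foldl
          (fun d k =>
            (List.range' (max 1 (k - M)) (min k N + 1 - max 1 (k - M))).foldl
              (fun d j =>
                Function.update d (k - j + 1)
                  (max (d (k - j)) (d (k - j + 1)) + τ (k - j) j))
              d)
          (fun _ => (0 : ℝ))) (i + 1) = D i N := by
  intro i hi
  have hinit : StoresDiagonal M N D 0 (fun _ => 0) := ⟨rfl, fun i _ => by simp [hD0]⟩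
  have hfinal := (hinit.foldl_range' hrec (M + N) (by omega)).2 i hi
  rw [show min (0 + (M + N) - i) N = N by omega] at hfinal
  exact hfinal

theorem stmt_11 (M N : ℕ) (hM : 1 ≤ M) (hN : 1 ≤ N) (τ D : ℕ → ℕ → ℝ)
    (hD0 : ∀ i, D i 0 = 0)
    (hrec : ∀ i j : ℕ, i ≤ M → 1 ≤ j →
      D i j = max (if i = 0 then (0 : ℝ) else D (i - 1) j) (D i (j - 1)) + τ i j) :
    ∀ i : ℕ, i ≤ M →
      ((List.range' 1 (M + N)).foldl
          (fun d k =>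
            (List.range' (max 1 (k - M)) (min k N + 1 - max 1 (k - M))).foldl
              (fun d j =>
                Function.update d (k - j + 1)
                  (max (d (k - j)) (d (k - j + 1)) + τ (k - j) j))
              d)
          (fun _ => (0 : ℝ))) (i + 1) = D i N :=
  stmt_11_general M N τ D hD0 hrec
end

section
/- Let M, N, P ≥ 1 with L₁ = min(M+1,N), L₂ = max(M+1,N), and T_P = 2(L₁+L₂-1) + 2⌊(L₁-1)/P⌋(L₁+L₂-1-P-P⌊(L₁-1)/P⌋). Then T_P ≥ 2(M+N), with equality if and only if P ≥ L₁. -/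
/-!
With `q = ⌊(L₁ - 1)/P⌋` and `L₁ + L₂ - 1 = M + N`, the excess `T_P - 2(M + N)` is
`2q(L₁ + L₂ - 1 - P(q + 1))`. It vanishes when `q = 0`, i.e. when `L₁ ≤ P`; otherwise
`P(q + 1) ≤ 2(L₁ - 1) < L₁ + L₂ - 1`, so both factors are positive.
-/

lemma div_mul_excess_pos {a b P : ℕ} (hab : a ≤ b) (hP : 0 < P) (hPa : P < a) :
    0 < (((a - 1) / P : ℕ) : ℤ) * ((a : ℤ) + b - 1 - P - P * (((a - 1) / P : ℕ) : ℤ)) := by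
  set q := (a - 1) / P
  have hq : 1 ≤ q := (Nat.le_div_iff_mul_le hP).mpr (by omega)
  have hqP : ((q * P : ℕ) : ℤ) < a :=
    Nat.cast_lt.mpr <| (Nat.le_sub_one_iff_lt (by omega)).mp (Nat.div_mul_le_self (a - 1) P)
  push_cast at hqP
  apply mul_pos (by exact_mod_cast hq)
  have : (P : ℤ) < a := by exact_mod_cast hPa
  have : (a : ℤ) ≤ b := by exact_mod_cast hab
  linarith

theorem stmt_14_general (M N P : ℕ) (hP : 1 ≤ P)
    (L₁ L₂ : ℕ) (hL₁ : L₁ = min (M + 1) N) (hL₂ : L₂ = max (M + 1) N) :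
    2 * ((L₁ : ℤ) + L₂ - 1) +
        2 * (((L₁ - 1) / P : ℕ) : ℤ) *
          ((L₁ : ℤ) + L₂ - 1 - P - P * (((L₁ - 1) / P : ℕ) : ℤ)) ≥
      2 * ((M : ℤ) + N) ∧
    (2 * ((L₁ : ℤ) + L₂ - 1) +
        2 * (((L₁ - 1) / P : ℕ) : ℤ) *
          ((L₁ : ℤ) + L₂ - 1 - P - P * (((L₁ - 1) / P : ℕ) : ℤ)) =
      2 * ((M : ℤ) + N) ↔ L₁ ≤ P) := by
  have hS : (L₁ : ℤ) + L₂ - 1 = M + N := by omega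
  rcases le_or_gt L₁ P with hLP | hPL
  · rw [Nat.div_eq_of_lt (by omega : L₁ - 1 < P)]
    simpa [hS] using hLP
  · have := div_mul_excess_pos (by omega : L₁ ≤ L₂) hP hPL
    exact ⟨by linarith, iff_of_false (by linarith) (by omega)⟩

theorem stmt_14 (M N P : ℕ) (hM : 1 ≤ M) (hN : 1 ≤ N) (hP : 1 ≤ P)
    (L₁ L₂ : ℕ) (hL₁ : L₁ = min (M + 1) N) (hL₂ : L₂ = max (M + 1) N) :
    2 * ((L₁ : ℤ) + L₂ - 1) +
        2 * (((L₁ - 1) / P : ℕ) : ℤ) *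
          ((L₁ : ℤ) + L₂ - 1 - P - P * (((L₁ - 1) / P : ℕ) : ℤ)) ≥
      2 * ((M : ℤ) + N) ∧
    (2 * ((L₁ : ℤ) + L₂ - 1) +
        2 * (((L₁ - 1) / P : ℕ) : ℤ) *
          ((L₁ : ℤ) + L₂ - 1 - P - P * (((L₁ - 1) / P : ℕ) : ℤ)) =
      2 * ((M : ℤ) + N) ↔ L₁ ≤ P) :=
  stmt_14_general M N P hP L₁ L₂ hL₁ hL₂
end
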